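/- For every integer n ≥ 2, the 3-coloring of R_n that assigns color 1 to every vertex a_i (1 ≤ i ≤ n−1), color 2 to every vertex b_i (1 ≤ i ≤ n−1), color 3 to every vertex c_i (0 ≤ i ≤ n−1), and color 1 to c_n is a strong conflict-free vertex-connection 3-coloring of R_n; in particular svcfc(R_n) ≤ 3. -/
import Mathlib


open SimpleGraph

/-- `f` is a strong conflict-free vertex-connection coloring of `G`: any two distinct
vertices are joined by a shortest path on which some color occurs exactly once. -/
def IsSCFVC {V α : Type*} [DecidableEq α] (G : SimpleGraph V) (f : V → α) : Prop :=
  ∀ u v : V, u ≠ v → ∃ p : G.Walk u v, p.length = G.dist u v ∧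
    ∃ c : α, (p.support.map f).count c = 1

/-- The strong conflict-free vertex-connection number. -/
noncomputable def svcfc {V : Type*} (G : SimpleGraph V) : ℕ :=
  sInf {k | ∃ f : V → Fin k, IsSCFVC G f}

/-- Vertices of the graph `R (m+1)`: `A i`, `B i` are `a_{i+1}`, `b_{i+1}` for `i : Fin m`,
and `C j` is `c_j` for `j : Fin (m+2)`. -/
inductive RV (m : ℕ) where
  | A : Fin m → RV m
  | B : Fin m → RV m
  | C : Fin (m + 2) → RV m
deriving DecidableEq

/-- The graph `R_{m+1}`: the graph `Q_m` together with a new vertex `c_{m+1}` adjacent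
only to `c_m`. -/
def Rgraph (m : ℕ) : SimpleGraph (RV m) :=
  SimpleGraph.fromRel (fun x y =>
    match x, y with
    | .A i, .B j => i.val = j.val
    | .A i, .C j => j.val = i.val ∨ j.val = i.val + 1
    | .B i, .C j => j.val = i.val ∨ j.val = i.val + 1
    | .C i, .C j => i.val = m ∧ j.val = m + 1
    | _, _ => False)

def F (m : ℕ) : RV m → Fin 3 := fun x =>
  match x with
  | .A _ => (0 : Fin 3)
  | .B _ => 1
  | .C j => if j = Fin.last (m + 1) then 0 else 2

def vA (m i : ℕ) : RV m := if h : i < m then .A ⟨i, h⟩ else .C 0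
def vB (m i : ℕ) : RV m := if h : i < m then .B ⟨i, h⟩ else .C 0
def vC (m j : ℕ) : RV m := if h : j < m + 2 then .C ⟨j, h⟩ else .C 0

lemma vA_eq {m : ℕ} (i : Fin m) : RV.A i = vA m i.val := by simp [vA, i.isLt]
lemma vB_eq {m : ℕ} (i : Fin m) : RV.B i = vB m i.val := by simp [vB, i.isLt]
lemma vC_eq {m : ℕ} (j : Fin (m+2)) : RV.C j = vC m j.val := by simp [vC, j.isLt]

lemma F_vA {m i : ℕ} (h : i < m) : F m (vA m i) = 0 := by simp [F, vA, h]
lemma F_vB {m i : ℕ} (h : i < m) : F m (vB m i) = 1 := by simp [F, vB, h]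
lemma F_vC {m j : ℕ} (h : j ≤ m) : F m (vC m j) = 2 := by
  have h2 : j < m + 2 := by omega
  simp only [F, vC, dif_pos h2]
  rw [if_neg]; intro he
  have := congrArg Fin.val he
  simp [Fin.last] at this; omega
lemma F_vC_last {m : ℕ} : F m (vC m (m+1)) = 0 := by
  simp [F, vC, Fin.last]

lemma adj_CA {m j i : ℕ} (hi : i < m) (hj : j < m + 2) (h : j = i ∨ j = i + 1) :
    (Rgraph m).Adj (vC m j) (vA m i) := by
  simp only [vC, vA, dif_pos hi, dif_pos hj, Rgraph, fromRel_adj]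
  exact ⟨by simp, Or.inr h⟩

lemma adj_AC {m j i : ℕ} (hi : i < m) (hj : j < m + 2) (h : j = i ∨ j = i + 1) :
    (Rgraph m).Adj (vA m i) (vC m j) := (adj_CA hi hj h).symm

lemma adj_CB {m j i : ℕ} (hi : i < m) (hj : j < m + 2) (h : j = i ∨ j = i + 1) :
    (Rgraph m).Adj (vC m j) (vB m i) := by
  simp only [vC, vB, dif_pos hi, dif_pos hj, Rgraph, fromRel_adj]
  exact ⟨by simp, Or.inr h⟩

lemma adj_BC {m j i : ℕ} (hi : i < m) (hj : j < m + 2) (h : j = i ∨ j = i + 1) :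
    (Rgraph m).Adj (vB m i) (vC m j) := (adj_CB hi hj h).symm

lemma adj_AB {m i : ℕ} (hi : i < m) : (Rgraph m).Adj (vA m i) (vB m i) := by
  simp only [vA, vB, dif_pos hi, Rgraph, fromRel_adj]
  exact ⟨by simp, Or.inl (by simp)⟩

lemma adj_CC {m : ℕ} : (Rgraph m).Adj (vC m m) (vC m (m+1)) := by
  simp only [vC, dif_pos (by omega : m < m + 2), dif_pos (by omega : m + 1 < m + 2),
    Rgraph, fromRel_adj]
  constructor
  · intro h; have := congrArg (fun x => match x with | RV.C j => j.val | _ => 0) h; simp at this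
  · exact Or.inl (by simp)

def phi (m : ℕ) : RV m → ℕ := fun x =>
  match x with
  | .A i => 2 * i.val + 1
  | .B i => 2 * i.val + 1
  | .C j => if j.val = m + 1 then 2 * m + 1 else 2 * j.val

lemma phi_vA {m i : ℕ} (h : i < m) : phi m (vA m i) = 2 * i + 1 := by simp [phi, vA, h]
lemma phi_vB {m i : ℕ} (h : i < m) : phi m (vB m i) = 2 * i + 1 := by simp [phi, vB, h]
lemma phi_vC {m j : ℕ} (h : j ≤ m) : phi m (vC m j) = 2 * j := by
  simp [phi, vC, (by omega : j < m + 2)]; omega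
lemma phi_vC_last {m : ℕ} : phi m (vC m (m+1)) = 2 * m + 1 := by
  simp [phi, vC]

lemma phi_adj {m : ℕ} {u v : RV m} (h : (Rgraph m).Adj u v) :
    (phi m u : ℤ) ≤ phi m v + 1 ∧ (phi m v : ℤ) ≤ phi m u + 1 := by
  rw [Rgraph, fromRel_adj] at h
  obtain ⟨-, h⟩ := h
  rcases u with i | i | i <;> rcases v with j | j | j <;>
    simp only [phi] <;> simp at h <;>
    first
      | (split_ifs <;> omega)
      | omega

lemma phi_walk {m : ℕ} {u v : RV m} (p : (Rgraph m).Walk u v) :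
    (phi m u : ℤ) ≤ phi m v + p.length ∧ (phi m v : ℤ) ≤ phi m u + p.length := by
  induction p with
  | nil => simp
  | cons h p ih =>
    have := phi_adj h
    simp only [SimpleGraph.Walk.length_cons]
    push_cast
    omega

open SimpleGraph.Walk in
def waW (m i : ℕ) : (k : ℕ) → (h : i + k ≤ m) → (Rgraph m).Walk (vC m i) (vC m (i + k))
  | 0, _ => Walk.nil
  | k+1, h =>
      ((waW m i k (by omega)).concat
        (adj_CA (by omega) (by omega) (Or.inl rfl))).concat
        (adj_AC (i := i + k) (by omega) (by omega) (Or.inr rfl))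

def wbW (m i : ℕ) : (k : ℕ) → (h : i + k ≤ m) → (Rgraph m).Walk (vC m i) (vC m (i + k))
  | 0, _ => Walk.nil
  | k+1, h =>
      ((wbW m i k (by omega)).concat
        (adj_CB (by omega) (by omega) (Or.inl rfl))).concat
        (adj_BC (i := i + k) (by omega) (by omega) (Or.inr rfl))

lemma waW_length (m i k : ℕ) (h : i + k ≤ m) : (waW m i k h).length = 2 * k := by
  induction k with
  | zero => rfl
  | succ k ih => simp [waW, ih (by omega)]; omega

lemma wbW_length (m i k : ℕ) (h : i + k ≤ m) : (wbW m i k h).length = 2 * k := by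
  induction k with
  | zero => rfl
  | succ k ih => simp [wbW, ih (by omega)]; omega

def listA : ℕ → List (Fin 3)
  | 0 => [2]
  | k+1 => listA k ++ [0, 2]

def listB : ℕ → List (Fin 3)
  | 0 => [2]
  | k+1 => listB k ++ [1, 2]

lemma waW_map (m i k : ℕ) (h : i + k ≤ m) :
    (waW m i k h).support.map (F m) = listA k := by
  induction k with
  | zero => simp [waW, listA, F_vC (by omega : i ≤ m)]
  | succ k ih =>
    simp [waW, Walk.support_concat, listA, ih (by omega),
      F_vA (by omega : i + k < m), F_vC (by omega : i + (k+1) ≤ m)]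

lemma wbW_map (m i k : ℕ) (h : i + k ≤ m) :
    (wbW m i k h).support.map (F m) = listB k := by
  induction k with
  | zero => simp [wbW, listB, F_vC (by omega : i ≤ m)]
  | succ k ih =>
    simp [wbW, Walk.support_concat, listB, ih (by omega),
      F_vB (by omega : i + k < m), F_vC (by omega : i + (k+1) ≤ m)]

lemma listA_count (k : ℕ) :
    (listA k).count 0 = k ∧ (listA k).count 1 = 0 ∧ (listA k).count 2 = k + 1 := by
  induction k with
  | zero => simp [listA]
  | succ k ih => simp [listA, List.count_append, ih]

lemma listB_count (k : ℕ) :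
    (listB k).count 0 = 0 ∧ (listB k).count 1 = k ∧ (listB k).count 2 = k + 1 := by
  induction k with
  | zero => simp [listB]
  | succ k ih => simp [listB, List.count_append, ih]


def P {m : ℕ} (u v : RV m) : Prop :=
  ∃ p : (Rgraph m).Walk u v, p.length = (Rgraph m).dist u v ∧
    ∃ c : Fin 3, (p.support.map (F m)).count c = 1

lemma P_symm {m : ℕ} {u v : RV m} (h : P u v) : P v u := by
  obtain ⟨p, hl, c, hc⟩ := h
  exact ⟨p.reverse, by rw [Walk.length_reverse, hl, SimpleGraph.dist_comm],
    c, by rwa [Walk.support_reverse, List.map_reverse, List.count_reverse]⟩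

lemma P_build {m : ℕ} {u v : RV m} (d : ℕ) (w : (Rgraph m).Walk u v)
    (hl : w.length = d) (hlb : ∀ p : (Rgraph m).Walk u v, d ≤ p.length)
    (c : Fin 3) (hc : (w.support.map (F m)).count c = 1) : P u v := by
  refine ⟨w, ?_, c, hc⟩
  obtain ⟨p0, hp0⟩ := SimpleGraph.Reachable.exists_walk_length_eq_dist ⟨w⟩
  have h1 : (Rgraph m).dist u v ≤ d := hl ▸ SimpleGraph.dist_le w
  have h2 : d ≤ (Rgraph m).dist u v := hp0 ▸ hlb p0
  omega

lemma lb_phi {m : ℕ} {u v : RV m} {d : ℕ}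
    (hd : d + phi m v ≤ phi m u ∨ d + phi m u ≤ phi m v) :
    ∀ p : (Rgraph m).Walk u v, d ≤ p.length := fun p => by
  have := phi_walk p; omega

lemma lb_ne {m : ℕ} {u v : RV m} (h : u ≠ v) :
    ∀ p : (Rgraph m).Walk u v, 1 ≤ p.length := fun p => by
  cases p with
  | nil => exact absurd rfl h
  | cons _ q => simp [Nat.succ_le_succ]

lemma P_AB_eq {m i : ℕ} (hi : i < m) : P (vA m i) (vB m i) := by
  refine P_build 1 (Walk.cons (adj_AB hi) Walk.nil) (by simp) (lb_ne ?_) 0 ?_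
  · simp [vA, vB, dif_pos hi]
  · simp [F_vA hi, F_vB hi]

lemma P_AB_lt {m i j : ℕ} (hij : i < j) (hj : j < m) : P (vA m i) (vB m j) := by
  refine P_build (2*(j-i))
    (Walk.cons (adj_AC (m := m) (i := i) (j := i+1) (by omega) (by omega) (by omega))
      (((waW m (i+1) (j-i-1) (by omega)).copy rfl (congrArg (vC m) (by omega))).concat
        (adj_CB (m := m) (i := j) (j := j) hj (by omega) (by omega))))
    ?_ (lb_phi ?_) 1 ?_
  · simp [waW_length]; omega
  · rw [phi_vA (by omega), phi_vB hj]; omega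
  · simp [Walk.support_concat, waW_map, F_vA (show i < m by omega), F_vB hj,
      List.count_cons, List.count_append, (listA_count (j-i-1)).2.1]

lemma P_BA_lt {m i j : ℕ} (hij : i < j) (hj : j < m) : P (vB m i) (vA m j) := by
  refine P_build (2*(j-i))
    (Walk.cons (adj_BC (m := m) (i := i) (j := i+1) (by omega) (by omega) (by omega))
      (((waW m (i+1) (j-i-1) (by omega)).copy rfl (congrArg (vC m) (by omega))).concat
        (adj_CA (m := m) (i := j) (j := j) hj (by omega) (by omega))))
    ?_ (lb_phi ?_) 1 ?_
  · simp [waW_length]; omega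
  · rw [phi_vB (by omega), phi_vA hj]; omega
  · simp [Walk.support_concat, waW_map, F_vB (show i < m by omega), F_vA hj,
      List.count_cons, List.count_append, (listA_count (j-i-1)).2.1]

lemma P_AA_lt {m i j : ℕ} (hij : i < j) (hj : j < m) : P (vA m i) (vA m j) := by
  rcases Nat.lt_or_ge i (j-1) with h2 | h2
  · refine P_build (2*(j-i))
      (Walk.cons (adj_AC (m := m) (i := i) (j := i+1) (by omega) (by omega) (by omega))
        (((((waW m (i+1) (j-i-2) (by omega)).copy rfl (congrArg (vC m) (by omega))).concat
          (adj_CB (m := m) (i := j-1) (j := j-1) (by omega) (by omega) (by omega))).concat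
          (adj_BC (m := m) (i := j-1) (j := j) (by omega) (by omega) (by omega))).concat
          (adj_CA (m := m) (i := j) (j := j) hj (by omega) (by omega))))
      ?_ (lb_phi ?_) 1 ?_
    · simp [waW_length]; omega
    · rw [phi_vA (by omega : i < m), phi_vA hj]; omega
    · simp [Walk.support_concat, waW_map, F_vA (show i < m by omega), F_vA hj,
        F_vB (show j-1 < m by omega), F_vC (show j ≤ m by omega),
        List.count_cons, List.count_append, (listA_count (j-i-2)).2.1]
  · have hji : j = i + 1 := by omega
    subst hji
    refine P_build 2
      (Walk.cons (adj_AC (m := m) (i := i) (j := i+1) (by omega) (by omega) (by omega))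
        (Walk.cons (adj_CA (m := m) (i := i+1) (j := i+1) hj (by omega) (by omega))
          Walk.nil))
      (by simp) (lb_phi ?_) 2 ?_
    · rw [phi_vA (by omega : i < m), phi_vA hj]; omega
    · simp [F_vA (show i < m by omega), F_vA hj, F_vC (show i+1 ≤ m by omega),
        List.count_cons]

lemma P_BB_lt {m i j : ℕ} (hij : i < j) (hj : j < m) : P (vB m i) (vB m j) := by
  rcases Nat.lt_or_ge i (j-1) with h2 | h2
  · refine P_build (2*(j-i))
      (Walk.cons (adj_BC (m := m) (i := i) (j := i+1) (by omega) (by omega) (by omega))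
        (((((wbW m (i+1) (j-i-2) (by omega)).copy rfl (congrArg (vC m) (by omega))).concat
          (adj_CA (m := m) (i := j-1) (j := j-1) (by omega) (by omega) (by omega))).concat
          (adj_AC (m := m) (i := j-1) (j := j) (by omega) (by omega) (by omega))).concat
          (adj_CB (m := m) (i := j) (j := j) hj (by omega) (by omega))))
      ?_ (lb_phi ?_) 0 ?_
    · simp [wbW_length]; omega
    · rw [phi_vB (by omega : i < m), phi_vB hj]; omega
    · simp [Walk.support_concat, wbW_map, F_vB (show i < m by omega), F_vB hj,
        F_vA (show j-1 < m by omega), F_vC (show j ≤ m by omega),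
        List.count_cons, List.count_append, (listB_count (j-i-2)).1]
  · have hji : j = i + 1 := by omega
    subst hji
    refine P_build 2
      (Walk.cons (adj_BC (m := m) (i := i) (j := i+1) (by omega) (by omega) (by omega))
        (Walk.cons (adj_CB (m := m) (i := i+1) (j := i+1) hj (by omega) (by omega))
          Walk.nil))
      (by simp) (lb_phi ?_) 2 ?_
    · rw [phi_vB (by omega : i < m), phi_vB hj]; omega
    · simp [F_vB (show i < m by omega), F_vB hj, F_vC (show i+1 ≤ m by omega),
        List.count_cons]

lemma P_CC_lt {m i j : ℕ} (hij : i < j) (hjm : j ≤ m) : P (vC m i) (vC m j) := by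
  rcases Nat.lt_or_ge i (j-1) with h2 | h2
  · refine P_build (2*(j-i))
      ((((waW m i (j-i-1) (by omega)).copy rfl (congrArg (vC m) (by omega))).concat
        (adj_CB (m := m) (i := j-1) (j := j-1) (by omega) (by omega) (by omega))).concat
        (adj_BC (m := m) (i := j-1) (j := j) (by omega) (by omega) (by omega)))
      ?_ (lb_phi ?_) 1 ?_
    · simp [waW_length]; omega
    · rw [phi_vC (by omega : i ≤ m), phi_vC hjm]; omega
    · simp [Walk.support_concat, waW_map, F_vB (show j-1 < m by omega),
        F_vC (show j ≤ m by omega),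
        List.count_cons, List.count_append, (listA_count (j-i-1)).2.1]
  · have hji : j = i + 1 := by omega
    subst hji
    refine P_build 2
      (Walk.cons (adj_CA (m := m) (i := i) (j := i) (by omega) (by omega) (by omega))
        (Walk.cons (adj_AC (m := m) (i := i) (j := i+1) (by omega) (by omega) (by omega))
          Walk.nil))
      (by simp) (lb_phi ?_) 0 ?_
    · rw [phi_vC (by omega : i ≤ m), phi_vC hjm]; omega
    · simp [F_vA (show i < m by omega), F_vC (show i ≤ m by omega),
        F_vC (show i+1 ≤ m by omega), List.count_cons]

lemma P_Clast {m i : ℕ} (him : i ≤ m) : P (vC m i) (vC m (m+1)) := by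
  rcases Nat.lt_or_ge i m with h2 | h2
  · refine P_build (2*(m-i)+1)
      (((((waW m i (m-i-1) (by omega)).copy rfl (congrArg (vC m) (by omega))).concat
        (adj_CB (m := m) (i := m-1) (j := m-1) (by omega) (by omega) (by omega))).concat
        (adj_BC (m := m) (i := m-1) (j := m) (by omega) (by omega) (by omega))).concat
        (adj_CC (m := m)))
      ?_ (lb_phi ?_) 1 ?_
    · simp [waW_length]; omega
    · rw [phi_vC (by omega : i ≤ m), phi_vC_last]; omega
    · simp [Walk.support_concat, waW_map, F_vB (show m-1 < m by omega),
        F_vC (show m ≤ m by omega), F_vC_last,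
        List.count_cons, List.count_append, (listA_count (m-i-1)).2.1]
  · have : i = m := by omega
    subst this
    refine P_build 1 (Walk.cons adj_CC Walk.nil) (by simp) (lb_phi ?_) 0 ?_
    · rw [phi_vC le_rfl, phi_vC_last]; omega
    · simp [F_vC le_rfl, F_vC_last, List.count_cons]

lemma P_AC_edge {m i j : ℕ} (hi : i < m) (hj : j = i ∨ j = i + 1) :
    P (vA m i) (vC m j) := by
  refine P_build 1 (Walk.cons (adj_AC hi (by omega) hj) Walk.nil) (by simp) (lb_ne ?_) 0 ?_
  · simp [vA, vC, dif_pos hi, dif_pos (show j < m + 2 by omega)]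
  · simp [F_vA hi, F_vC (show j ≤ m by omega), List.count_cons]

lemma P_AC_up {m i j : ℕ} (h2 : i + 2 ≤ j) (hj : j ≤ m) : P (vA m i) (vC m j) := by
  refine P_build (2*(j-i)-1)
    (Walk.cons (adj_AC (m := m) (i := i) (j := i+1) (by omega) (by omega) (by omega))
      ((wbW m (i+1) (j-i-1) (by omega)).copy rfl (congrArg (vC m) (by omega))))
    ?_ (lb_phi ?_) 0 ?_
  · simp [wbW_length]; omega
  · rw [phi_vA (by omega : i < m), phi_vC hj]; omega
  · simp [wbW_map, F_vA (show i < m by omega),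
      List.count_cons, (listB_count (j-i-1)).1]

lemma P_A_last {m i : ℕ} (hi : i < m) : P (vA m i) (vC m (m+1)) := by
  rcases Nat.lt_or_ge (i+1) m with h2 | h2
  · refine P_build (2*(m-i))
      (Walk.cons (adj_AC (m := m) (i := i) (j := i+1) (by omega) (by omega) (by omega))
        (((((waW m (i+1) (m-i-2) (by omega)).copy rfl (congrArg (vC m) (by omega))).concat
          (adj_CB (m := m) (i := m-1) (j := m-1) (by omega) (by omega) (by omega))).concat
          (adj_BC (m := m) (i := m-1) (j := m) (by omega) (by omega) (by omega))).concat
          adj_CC))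
      ?_ (lb_phi ?_) 1 ?_
    · simp [waW_length]; omega
    · rw [phi_vA hi, phi_vC_last]; omega
    · simp [Walk.support_concat, waW_map, F_vA hi, F_vB (show m-1 < m by omega),
        F_vC (show m ≤ m by omega), F_vC_last,
        List.count_cons, List.count_append, (listA_count (m-i-2)).2.1]
  · have : i = m - 1 := by omega
    refine P_build 2
      (Walk.cons (adj_AC (m := m) (i := i) (j := m) (by omega) (by omega) (by omega))
        (Walk.cons adj_CC Walk.nil))
      (by simp) (lb_phi ?_) 2 ?_
    · rw [phi_vA hi, phi_vC_last]; omega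
    · simp [F_vA hi, F_vC (show m ≤ m by omega), F_vC_last, List.count_cons]

lemma P_CA_dn {m i j : ℕ} (hji : j < i) (hi : i < m) : P (vC m j) (vA m i) := by
  refine P_build (2*(i-j)+1)
    (((wbW m j (i-j) (by omega)).copy rfl (congrArg (vC m) (by omega))).concat
      (adj_CA (m := m) (i := i) (j := i) hi (by omega) (by omega)))
    ?_ (lb_phi ?_) 0 ?_
  · simp [wbW_length] <;> omega
  · rw [phi_vC (by omega : j ≤ m), phi_vA hi]; omega
  · simp [Walk.support_concat, wbW_map, F_vA hi,
      List.count_append, (listB_count (i-j)).1]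

lemma P_BC_edge {m i j : ℕ} (hi : i < m) (hj : j = i ∨ j = i + 1) :
    P (vB m i) (vC m j) := by
  refine P_build 1 (Walk.cons (adj_BC hi (by omega) hj) Walk.nil) (by simp) (lb_ne ?_) 1 ?_
  · simp [vB, vC, dif_pos hi, dif_pos (show j < m + 2 by omega)]
  · simp [F_vB hi, F_vC (show j ≤ m by omega), List.count_cons]

lemma P_BC_up {m i j : ℕ} (h2 : i + 2 ≤ j) (hj : j ≤ m) : P (vB m i) (vC m j) := by
  refine P_build (2*(j-i)-1)
    (Walk.cons (adj_BC (m := m) (i := i) (j := i+1) (by omega) (by omega) (by omega))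
      ((waW m (i+1) (j-i-1) (by omega)).copy rfl (congrArg (vC m) (by omega))))
    ?_ (lb_phi ?_) 1 ?_
  · simp [waW_length]; omega
  · rw [phi_vB (by omega : i < m), phi_vC hj]; omega
  · simp [waW_map, F_vB (show i < m by omega),
      List.count_cons, (listA_count (j-i-1)).2.1]

lemma P_B_last {m i : ℕ} (hi : i < m) : P (vB m i) (vC m (m+1)) := by
  refine P_build (2*(m-i))
    (Walk.cons (adj_BC (m := m) (i := i) (j := i+1) (by omega) (by omega) (by omega))
      (((waW m (i+1) (m-i-1) (by omega)).copy rfl (congrArg (vC m) (by omega))).concat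
        adj_CC))
    ?_ (lb_phi ?_) 1 ?_
  · simp [waW_length]; omega
  · rw [phi_vB hi, phi_vC_last]; omega
  · simp [Walk.support_concat, waW_map, F_vB hi, F_vC_last,
      List.count_cons, List.count_append, (listA_count (m-i-1)).2.1]

lemma P_CB_dn {m i j : ℕ} (hji : j < i) (hi : i < m) : P (vC m j) (vB m i) := by
  refine P_build (2*(i-j)+1)
    (((waW m j (i-j) (by omega)).copy rfl (congrArg (vC m) (by omega))).concat
      (adj_CB (m := m) (i := i) (j := i) hi (by omega) (by omega)))
    ?_ (lb_phi ?_) 1 ?_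
  · simp [waW_length] <;> omega
  · rw [phi_vC (by omega : j ≤ m), phi_vB hi]; omega
  · simp [Walk.support_concat, waW_map, F_vB hi,
      List.count_append, (listA_count (i-j)).2.1]

lemma main (m : ℕ) : IsSCFVC (Rgraph m) (F m) := by
  intro u v hne
  suffices h : P u v from h
  rcases u with i | i | i <;> rcases v with j | j | j
  · -- A A
    rw [vA_eq i, vA_eq j]
    rcases Nat.lt_trichotomy i.val j.val with h | h | h
    · exact P_AA_lt h j.isLt
    · exact absurd (congrArg RV.A (Fin.ext h)) hne
    · exact P_symm (P_AA_lt h i.isLt)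
  · -- A B
    rw [vA_eq i, vB_eq j]
    rcases Nat.lt_trichotomy i.val j.val with h | h | h
    · exact P_AB_lt h j.isLt
    · rw [h]; exact P_AB_eq j.isLt
    · exact P_symm (P_BA_lt h i.isLt)
  · -- A C
    rw [vA_eq i, vC_eq j]
    have hd : j.val < i.val ∨ (j.val = i.val ∨ j.val = i.val + 1) ∨
        (i.val + 2 ≤ j.val ∧ j.val ≤ m) ∨ j.val = m + 1 := by
      have := j.isLt; have := i.isLt; omega
    rcases hd with h | h | ⟨h1, h2⟩ | h
    · exact P_symm (P_CA_dn h i.isLt)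
    · exact P_AC_edge i.isLt h
    · exact P_AC_up h1 h2
    · rw [h]; exact P_A_last i.isLt
  · -- B A
    rw [vB_eq i, vA_eq j]
    rcases Nat.lt_trichotomy i.val j.val with h | h | h
    · exact P_BA_lt h j.isLt
    · rw [h]; exact P_symm (P_AB_eq j.isLt)
    · exact P_symm (P_AB_lt h i.isLt)
  · -- B B
    rw [vB_eq i, vB_eq j]
    rcases Nat.lt_trichotomy i.val j.val with h | h | h
    · exact P_BB_lt h j.isLt
    · exact absurd (congrArg RV.B (Fin.ext h)) hne
    · exact P_symm (P_BB_lt h i.isLt)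
  · -- B C
    rw [vB_eq i, vC_eq j]
    have hd : j.val < i.val ∨ (j.val = i.val ∨ j.val = i.val + 1) ∨
        (i.val + 2 ≤ j.val ∧ j.val ≤ m) ∨ j.val = m + 1 := by
      have := j.isLt; have := i.isLt; omega
    rcases hd with h | h | ⟨h1, h2⟩ | h
    · exact P_symm (P_CB_dn h i.isLt)
    · exact P_BC_edge i.isLt h
    · exact P_BC_up h1 h2
    · rw [h]; exact P_B_last i.isLt
  · -- C A
    rw [vC_eq i, vA_eq j]
    have hd : i.val < j.val ∨ (i.val = j.val ∨ i.val = j.val + 1) ∨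
        (j.val + 2 ≤ i.val ∧ i.val ≤ m) ∨ i.val = m + 1 := by
      have := i.isLt; have := j.isLt; omega
    rcases hd with h | h | ⟨h1, h2⟩ | h
    · exact P_CA_dn h j.isLt
    · exact P_symm (P_AC_edge j.isLt h)
    · exact P_symm (P_AC_up h1 h2)
    · rw [h]; exact P_symm (P_A_last j.isLt)
  · -- C B
    rw [vC_eq i, vB_eq j]
    have hd : i.val < j.val ∨ (i.val = j.val ∨ i.val = j.val + 1) ∨
        (j.val + 2 ≤ i.val ∧ i.val ≤ m) ∨ i.val = m + 1 := by
      have := i.isLt; have := j.isLt; omega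
    rcases hd with h | h | ⟨h1, h2⟩ | h
    · exact P_CB_dn h j.isLt
    · exact P_symm (P_BC_edge j.isLt h)
    · exact P_symm (P_BC_up h1 h2)
    · rw [h]; exact P_symm (P_B_last j.isLt)
  · -- C C
    rw [vC_eq i, vC_eq j]
    have hine : i.val ≠ j.val := fun h => hne (congrArg RV.C (Fin.ext h))
    rcases Nat.lt_trichotomy i.val j.val with h | h | h
    · rcases Nat.lt_or_ge j.val (m+1) with h2 | h2
      · exact P_CC_lt h (by omega)
      · have : j.val = m + 1 := by have := j.isLt; omega
        rw [this]; exact P_Clast (by omega)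
    · exact absurd h hine
    · rcases Nat.lt_or_ge i.val (m+1) with h2 | h2
      · exact P_symm (P_CC_lt h (by omega))
      · have : i.val = m + 1 := by have := i.isLt; omega
        rw [this]; exact P_symm (P_Clast (by omega))


/-- For `n ≥ 2`, the coloring of `R n` (realized as `Rgraph (n-1)`) giving all `a_i`
color `1`, all `b_i` color `2`, all `c_i` with `i ≤ n-1` color `3` and `c_n` color `1`
is a strong conflict-free vertex-connection `3`-coloring; in particular
`svcfc (R n) ≤ 3`.  (Colors `1,2,3` are realized as `0,1,2 : Fin 3`.) -/
theorem stmt7 (n : ℕ) (hn : 2 ≤ n) :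
    IsSCFVC (Rgraph (n - 1)) (fun x =>
      match x with
      | .A _ => (0 : Fin 3)
      | .B _ => 1
      | .C j => if j = Fin.last (n - 1 + 1) then 0 else 2) ∧
    svcfc (Rgraph (n - 1)) ≤ 3 := by
  have hF : (fun x =>
      match x with
      | .A _ => (0 : Fin 3)
      | .B _ => 1
      | .C j => if j = Fin.last (n - 1 + 1) then 0 else 2) = F (n - 1) := by
    funext x; cases x <;> rfl
  have h1 : IsSCFVC (Rgraph (n - 1)) (F (n - 1)) := main (n - 1)
  constructor
  · rw [hF]; exact h1
  · exact Nat.sInf_le ⟨F (n - 1), h1⟩
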